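/- Formally étale morphisms of cdga's satisfy two-out-of-three on the right: if f : A → B and g : B → C are morphisms of cdga's such that f and g ∘ f are formally étale, then g is formally étale. -/

import Mathlib

/-!
Cohomological skeleton of a (non-positively graded) commutative differential graded
ℂ-algebra (cdga): we record the commutative ℂ-algebra `H0 = H^0(A)` together with the
`H0`-modules `H n = H^n(A)` (only the indices `n < 0` are relevant for non-positively
graded cdga's).
-/
structure CDGACoh : Type 1 where
  H0 : Type
  commRing : CommRing H0
  alg : Algebra ℂ H0
  H : ℤ → Type
  acg : ∀ n, AddCommGroup (H n)
  mod : ∀ n, Module H0 (H n)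

attribute [instance] CDGACoh.commRing CDGACoh.alg CDGACoh.acg CDGACoh.mod

/-- A morphism of cdga's, seen at the level of cohomology: a ℂ-algebra map on `H^0`
and additive maps on each `H^n`, semilinear over the `H^0`-map. -/
structure CDGAHom (A B : CDGACoh) : Type where
  h0 : A.H0 →ₐ[ℂ] B.H0
  hn : ∀ n : ℤ, A.H n →+ B.H n
  semilinear : ∀ (n : ℤ) (r : A.H0) (x : A.H n), hn n (r • x) = h0 r • hn n x

namespace CDGAHom

/-- The identity morphism. -/
def id (A : CDGACoh) : CDGAHom A A where
  h0 := AlgHom.id ℂ A.H0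
  hn := fun _ => AddMonoidHom.id _
  semilinear := fun _ _ _ => rfl

/-- Composition of morphisms. -/
def comp {A B C : CDGACoh} (g : CDGAHom B C) (f : CDGAHom A B) : CDGAHom A C where
  h0 := g.h0.comp f.h0
  hn := fun n => (g.hn n).comp (f.hn n)
  semilinear := by
    intro n r x
    simp only [AddMonoidHom.comp_apply, AlgHom.comp_apply]
    rw [f.semilinear, g.semilinear]

/-- The natural base-change map `H^n(A) ⊗_{H^0(A)} H^0(B) → H^n(B)`,
`x ⊗ b ↦ b • f(x)`. Here `H^0(B)` and `H^n(B)` are `H^0(A)`-modules via `f`. -/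
noncomputable def bc {A B : CDGACoh} (f : CDGAHom A B) (n : ℤ) :
    letI : Module A.H0 B.H0 := Module.compHom B.H0 f.h0.toRingHom
    TensorProduct A.H0 (A.H n) B.H0 → B.H n :=
  letI : Module A.H0 B.H0 := Module.compHom B.H0 f.h0.toRingHom
  letI : Module A.H0 (B.H n) := Module.compHom (B.H n) f.h0.toRingHom
  TensorProduct.lift
    { toFun := fun x =>
        { toFun := fun s => s • f.hn n x
          map_add' := fun s t => add_smul s t _
          map_smul' := fun r s => by
            show (f.h0 r * s) • f.hn n x = f.h0 r • s • f.hn n x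
            rw [mul_smul] }
      map_add' := fun x y => by
        ext s
        show s • f.hn n (x + y) = s • f.hn n x + s • f.hn n y
        rw [map_add, smul_add]
      map_smul' := fun r x => by
        ext s
        show s • f.hn n (r • x) = f.h0 r • s • f.hn n x
        rw [f.semilinear, smul_comm] }

/-- A morphism of cdga's is formally étale if `H^0(A) → H^0(B)` is formally étale
as a map of commutative rings, and for every `n < 0` the natural base-change map
`H^n(A) ⊗_{H^0(A)} H^0(B) → H^n(B)` is an isomorphism. -/
def IsFormallyEtale {A B : CDGACoh} (f : CDGAHom A B) : Prop :=
  (letI : Algebra A.H0 B.H0 := f.h0.toRingHom.toAlgebra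
   Algebra.FormallyEtale A.H0 B.H0) ∧
  ∀ n : ℤ, n < 0 → Function.Bijective (f.bc n)

end CDGAHom


/-!
On `H^0` this is the cancellation property of formally étale ring maps. In degree `n < 0`,
the base-change map of `g ∘ f` factors as
`H^n(A) ⊗_{H^0(A)} H^0(C) → H^n(B) ⊗_{H^0(B)} H^0(C) → H^n(C)`, `m ⊗ c ↦ f(m) ⊗ c ↦ c • g(f(m))`,
whose second arrow is the base-change map of `g`. Through the iterated base change
`H^n(A) ⊗_{H^0(A)} H^0(C) ≅ (H^n(A) ⊗_{H^0(A)} H^0(B)) ⊗_{H^0(B)} H^0(C)`, the first arrow is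
the base change of the surjective base-change map of `f`, so it is surjective. As the composite
is bijective, the first arrow is bijective, and hence so is the second.
-/

namespace CDGAHom

open scoped TensorProduct

variable {A B C : CDGACoh}

theorem bc_tmul (f : CDGAHom A B) (n : ℤ) (x : A.H n) (s : B.H0) :
    letI : Module A.H0 B.H0 := Module.compHom B.H0 f.h0.toRingHom
    f.bc n (x ⊗ₜ[A.H0] s) = s • f.hn n x :=
  rfl

theorem bc_zero (f : CDGAHom A B) (n : ℤ) : f.bc n 0 = 0 :=
  map_zero _

theorem bc_add (f : CDGAHom A B) (n : ℤ) :
    letI : Module A.H0 B.H0 := Module.compHom B.H0 f.h0.toRingHom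
    ∀ x y : A.H n ⊗[A.H0] B.H0, f.bc n (x + y) = f.bc n x + f.bc n y :=
  map_add _

noncomputable def mapTensor (f : CDGAHom A B) (g : CDGAHom B C) (n : ℤ) :
    letI : Module A.H0 C.H0 := Module.compHom C.H0 (g.comp f).h0.toRingHom
    letI : Module B.H0 C.H0 := Module.compHom C.H0 g.h0.toRingHom
    A.H n ⊗[A.H0] C.H0 →+ B.H n ⊗[B.H0] C.H0 :=
  letI : Module A.H0 C.H0 := Module.compHom C.H0 (g.comp f).h0.toRingHom
  letI : Module B.H0 C.H0 := Module.compHom C.H0 g.h0.toRingHom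
  TensorProduct.liftAddHom
    (AddMonoidHom.mk' (fun m => (TensorProduct.mk B.H0 (B.H n) C.H0 (f.hn n m)).toAddMonoidHom)
      fun m m' => by ext c; simp)
    fun a m c => by
      show f.hn n (a • m) ⊗ₜ[B.H0] c = f.hn n m ⊗ₜ[B.H0] (g.h0 (f.h0 a) * c)
      rw [f.semilinear, TensorProduct.smul_tmul]
      rfl

theorem mapTensor_tmul (f : CDGAHom A B) (g : CDGAHom B C) (n : ℤ) (m : A.H n) (c : C.H0) :
    letI : Module A.H0 C.H0 := Module.compHom C.H0 (g.comp f).h0.toRingHom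
    letI : Module B.H0 C.H0 := Module.compHom C.H0 g.h0.toRingHom
    f.mapTensor g n (m ⊗ₜ[A.H0] c) = f.hn n m ⊗ₜ[B.H0] c :=
  rfl

theorem bc_mapTensor (f : CDGAHom A B) (g : CDGAHom B C) (n : ℤ) :
    letI : Module A.H0 C.H0 := Module.compHom C.H0 (g.comp f).h0.toRingHom
    letI : Module B.H0 C.H0 := Module.compHom C.H0 g.h0.toRingHom
    ∀ t : A.H n ⊗[A.H0] C.H0, g.bc n (f.mapTensor g n t) = (g.comp f).bc n t := by
  intro t
  induction t using TensorProduct.induction_on with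
  | zero => rw [map_zero, bc_zero, bc_zero]
  | tmul m c => rfl
  | add t t' ht ht' => rw [map_add, bc_add, bc_add, ht, ht']

theorem exists_mapTensor_eq_bc_tmul (f : CDGAHom A B) (g : CDGAHom B C) (n : ℤ) :
    letI : Module A.H0 B.H0 := Module.compHom B.H0 f.h0.toRingHom
    letI : Module A.H0 C.H0 := Module.compHom C.H0 (g.comp f).h0.toRingHom
    letI : Module B.H0 C.H0 := Module.compHom C.H0 g.h0.toRingHom
    ∀ (t : A.H n ⊗[A.H0] B.H0) (c : C.H0), ∃ u, f.mapTensor g n u = f.bc n t ⊗ₜ[B.H0] c := by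
  let : Module A.H0 B.H0 := Module.compHom B.H0 f.h0.toRingHom
  let : Module A.H0 C.H0 := Module.compHom C.H0 (g.comp f).h0.toRingHom
  let : Module B.H0 C.H0 := Module.compHom C.H0 g.h0.toRingHom
  intro t c
  induction t using TensorProduct.induction_on with
  | zero => exact ⟨0, by rw [map_zero, bc_zero, TensorProduct.zero_tmul]⟩
  | tmul m b =>
    refine ⟨m ⊗ₜ[A.H0] (g.h0 b * c), ?_⟩
    rw [mapTensor_tmul, bc_tmul, TensorProduct.smul_tmul]
    rfl
  | add t t' ht ht' =>
    obtain ⟨u, hu⟩ := ht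
    obtain ⟨u', hu'⟩ := ht'
    exact ⟨u + u', by rw [map_add, hu, hu', bc_add, TensorProduct.add_tmul]⟩

theorem mapTensor_surjective (f : CDGAHom A B) (g : CDGAHom B C) (n : ℤ)
    (hf : Function.Surjective (f.bc n)) :
    letI : Module A.H0 C.H0 := Module.compHom C.H0 (g.comp f).h0.toRingHom
    letI : Module B.H0 C.H0 := Module.compHom C.H0 g.h0.toRingHom
    Function.Surjective (f.mapTensor g n) := by
  intro x
  induction x using TensorProduct.induction_on with
  | zero => exact ⟨0, map_zero _⟩
  | tmul y c =>
    obtain ⟨t, rfl⟩ := hf y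
    exact exists_mapTensor_eq_bc_tmul f g n t c
  | add x x' hx hx' =>
    obtain ⟨u, hu⟩ := hx
    obtain ⟨u', hu'⟩ := hx'
    exact ⟨u + u', by rw [map_add, hu, hu']⟩

theorem bc_bijective_of_comp (f : CDGAHom A B) (g : CDGAHom B C) (n : ℤ)
    (hf : Function.Surjective (f.bc n)) (hgf : Function.Bijective ((g.comp f).bc n)) :
    Function.Bijective (g.bc n) := by
  have hcomp : g.bc n ∘ f.mapTensor g n = (g.comp f).bc n := funext (bc_mapTensor f g n)
  rw [← hcomp] at hgf
  have hmap : Function.Bijective (f.mapTensor g n) :=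
    ⟨hgf.injective.of_comp, mapTensor_surjective f g n hf⟩
  exact (Function.Bijective.of_comp_iff _ hmap).mp hgf

theorem h0_formallyEtale_of_comp (f : CDGAHom A B) (g : CDGAHom B C)
    (hf : letI := f.h0.toRingHom.toAlgebra; Algebra.FormallyEtale A.H0 B.H0)
    (hgf : letI := (g.comp f).h0.toRingHom.toAlgebra; Algebra.FormallyEtale A.H0 C.H0) :
    letI := g.h0.toRingHom.toAlgebra; Algebra.FormallyEtale B.H0 C.H0 := by
  let := f.h0.toRingHom.toAlgebra
  let := g.h0.toRingHom.toAlgebra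
  let := (g.comp f).h0.toRingHom.toAlgebra
  have : IsScalarTower A.H0 B.H0 C.H0 := IsScalarTower.of_algebraMap_eq' rfl
  exact Algebra.FormallyEtale.of_restrictScalars (R := A.H0)

end CDGAHom

/-- Formally étale morphisms of cdga's satisfy two-out-of-three on the
right: if `f : A → B` and `g ∘ f : A → C` are formally étale, then `g : B → C` is
formally étale. -/
theorem isFormallyEtale_of_comp {A B C : CDGACoh} (f : CDGAHom A B) (g : CDGAHom B C)
    (hf : f.IsFormallyEtale) (hgf : (g.comp f).IsFormallyEtale) :
    g.IsFormallyEtale :=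
  ⟨f.h0_formallyEtale_of_comp g hf.1 hgf.1,
    fun n hn => f.bc_bijective_of_comp g n (hf.2 n hn).2 (hgf.2 n hn)⟩
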